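/- Let V be a real vector space equipped with a hypercomplex structure (I, J), K := I∘J, and let Ω : V × V → ℂ be an ℝ-bilinear alternating form such that Ω(IX, Y) = i·Ω(X, Y) for all X, Y (type (2,0) with respect to I), conj(Ω(JX, JY)) = Ω(X, Y) for all X, Y (q-real), and Ω(X, JX) > 0 for all X ≠ 0 (q-positive; the value Ω(X, JX) is automatically real by q-realness). Then g(X, Y) := 2·Re Ω(X, JY) defines a hyperhermitian inner product on V whose fundamental form is Ω, and g is the unique hyperhermitian inner product with fundamental form Ω. Consequently, the assignment g ↦ Ω is a bijection between hyperhermitian inner products on (V, I, J) and ℝ-bilinear alternating complex-valued forms on V that are of type (2,0) with respect to I, q-real and q-positive. -/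

import Mathlib

/-!
Q-realness and `J² = -1` together say `Ω(X, JY) = -conj Ω(JX, Y)`. The real part of the
fundamental-form identity reads `g(JX, Y) = 2 Re Ω(X, Y)`; putting `-JX` for `X` and using the
previous identity forces `g(X, Y) = 2 Re Ω(X, JY)`. Conversely, that identity, antisymmetry and
the type `(2,0)` condition make `2 Re Ω(X, JY)` symmetric and `I`- and `J`-invariant, and its
imaginary companion `2 Re Ω(IJX, JY) = 2 Im Ω(X, Y)` recovers the imaginary part of `Ω`.
-/

open ComplexOrder

/-- `B` is a hyperhermitian inner product on `(V, I, J)` whose fundamental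
`(2,0)`-form `(B(JX,Y) + i·B(KX,Y))/2` (with `K := I∘J`) equals `Ω`. -/
def IsHyperHermitianWithFundForm {V : Type*} [AddCommGroup V] [Module ℝ V]
    (I J : Module.End ℝ V) (Ω : V →ₗ[ℝ] V →ₗ[ℝ] ℂ)
    (B : V →ₗ[ℝ] V →ₗ[ℝ] ℝ) : Prop :=
  (∀ X Y : V, B X Y = B Y X) ∧
  (∀ X : V, X ≠ 0 → 0 < B X X) ∧
  (∀ X Y : V, B (I X) (I Y) = B X Y) ∧
  (∀ X Y : V, B (J X) (J Y) = B X Y) ∧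
  (∀ X Y : V, ((B (J X) Y : ℂ) + Complex.I * (B ((I * J) X) Y : ℂ)) / 2 = Ω X Y)

theorem Module.End.apply_apply_of_mul_self_eq_neg_one {R M : Type*} [Ring R] [AddCommGroup M]
    [Module R M] {J : Module.End R M} (hJ : J * J = -1) (X : M) : J (J X) = -X := by
  simpa using LinearMap.congr_fun hJ X

section FundForm

variable {V : Type*} [AddCommGroup V] [Module ℝ V] {I J : Module.End ℝ V}
  {Ω : V →ₗ[ℝ] V →ₗ[ℝ] ℂ}

theorem apply_I_right_of_type_two_zero (halt : ∀ X Y : V, Ω X Y = -(Ω Y X))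
    (htype : ∀ X Y : V, Ω (I X) Y = Complex.I * Ω X Y) (X Y : V) :
    Ω X (I Y) = Complex.I * Ω X Y := by
  rw [halt, htype, halt Y X, mul_neg, neg_neg]

theorem apply_J_right_of_qreal (hJ : J * J = -1)
    (hqreal : ∀ X Y : V, (starRingEnd ℂ) (Ω (J X) (J Y)) = Ω X Y) (X Y : V) :
    Ω X (J Y) = -(starRingEnd ℂ) (Ω (J X) Y) := by
  rw [← hqreal X (J Y), Module.End.apply_apply_of_mul_self_eq_neg_one hJ, map_neg, map_neg]

theorem re_apply_J_right_of_qreal (hJ : J * J = -1)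
    (hqreal : ∀ X Y : V, (starRingEnd ℂ) (Ω (J X) (J Y)) = Ω X Y) (X Y : V) :
    (Ω X (J Y)).re = -(Ω (J X) Y).re := by
  rw [apply_J_right_of_qreal hJ hqreal, Complex.neg_re, Complex.conj_re]

variable (J Ω) in
noncomputable def metricOfFundForm : V →ₗ[ℝ] V →ₗ[ℝ] ℝ :=
  (2 : ℝ) • (Ω.compl₂ J).compr₂ Complex.reLm

theorem metricOfFundForm_apply (X Y : V) : metricOfFundForm J Ω X Y = 2 * (Ω X (J Y)).re :=
  rfl

theorem IsHyperHermitianWithFundForm.apply_eq {B : V →ₗ[ℝ] V →ₗ[ℝ] ℝ} (hJ : J * J = -1)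
    (hqreal : ∀ X Y : V, (starRingEnd ℂ) (Ω (J X) (J Y)) = Ω X Y)
    (hB : IsHyperHermitianWithFundForm I J Ω B) (X Y : V) :
    B X Y = 2 * (Ω X (J Y)).re := by
  have hfund := congrArg Complex.re (hB.2.2.2.2 (-J X) Y)
  simp only [map_neg, Module.End.apply_apply_of_mul_self_eq_neg_one hJ, neg_neg,
    Complex.div_ofNat_re, Complex.add_re, Complex.ofReal_re, Complex.I_mul_re,
    Complex.ofReal_im, neg_zero, add_zero, LinearMap.neg_apply, Complex.neg_re] at hfund
  rw [re_apply_J_right_of_qreal hJ hqreal]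
  linarith

theorem isHyperHermitianWithFundForm_metricOfFundForm (hJ : J * J = -1)
    (hIJ : I * J = -(J * I)) (halt : ∀ X Y : V, Ω X Y = -(Ω Y X))
    (htype : ∀ X Y : V, Ω (I X) Y = Complex.I * Ω X Y)
    (hqreal : ∀ X Y : V, (starRingEnd ℂ) (Ω (J X) (J Y)) = Ω X Y)
    (hqpos : ∀ X : V, X ≠ 0 → 0 < Ω X (J X)) :
    IsHyperHermitianWithFundForm I J Ω (metricOfFundForm J Ω) := by
  have hre := re_apply_J_right_of_qreal hJ hqreal
  simp only [IsHyperHermitianWithFundForm, metricOfFundForm_apply]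
  refine ⟨fun X Y => ?symm, fun X hX => ?pos, fun X Y => ?I_inv, fun X Y => ?J_inv,
    fun X Y => ?fund⟩
  case symm => rw [hre Y X, halt, Complex.neg_re]
  case pos => simpa using (Complex.lt_def.mp (hqpos X hX)).1
  case I_inv =>
    have hJI : J (I Y) = -I (J Y) := by
      have h := LinearMap.congr_fun hIJ Y
      rw [Module.End.mul_apply, LinearMap.neg_apply, Module.End.mul_apply] at h
      rw [h, neg_neg]
    rw [hJI, map_neg, htype, apply_I_right_of_type_two_zero halt htype, ← mul_assoc,
      Complex.I_mul_I]
    simp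
  case J_inv =>
    rw [Module.End.apply_apply_of_mul_self_eq_neg_one hJ, hre X Y, map_neg, Complex.neg_re]
  case fund =>
    have hconj : Ω (J X) (J Y) = (starRingEnd ℂ) (Ω X Y) := by
      rw [← hqreal X Y, Complex.conj_conj]
    rw [Module.End.mul_apply, htype, hconj]
    apply Complex.ext <;> simp

end FundForm

theorem existsUnique_hyperhermitian_of_fundForm_general
    {V : Type*} [AddCommGroup V] [Module ℝ V]
    (I J : Module.End ℝ V)
    (hJ : J * J = -1) (hIJ : I * J = -(J * I))
    (Ω : V →ₗ[ℝ] V →ₗ[ℝ] ℂ)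
    (halt : ∀ X Y : V, Ω X Y = -(Ω Y X))
    (htype : ∀ X Y : V, Ω (I X) Y = Complex.I * Ω X Y)
    (hqreal : ∀ X Y : V, (starRingEnd ℂ) (Ω (J X) (J Y)) = Ω X Y)
    (hqpos : ∀ X : V, X ≠ 0 → 0 < Ω X (J X)) :
    (∃! B : V →ₗ[ℝ] V →ₗ[ℝ] ℝ, IsHyperHermitianWithFundForm I J Ω B) ∧
    (∀ B : V →ₗ[ℝ] V →ₗ[ℝ] ℝ, IsHyperHermitianWithFundForm I J Ω B →
      ∀ X Y : V, B X Y = 2 * (Ω X (J Y)).re) := by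
  refine ⟨⟨metricOfFundForm J Ω,
    isHyperHermitianWithFundForm_metricOfFundForm hJ hIJ halt htype hqreal hqpos,
    fun B hB => LinearMap.ext₂ (hB.apply_eq hJ hqreal)⟩, fun B hB => hB.apply_eq hJ hqreal⟩

/-- given an ℝ-bilinear alternating `Ω : V × V → ℂ` of type `(2,0)`
w.r.t. `I`, q-real and q-positive, the formula `g(X,Y) := 2·Re Ω(X, JY)` defines
the unique hyperhermitian inner product on `(V, I, J)` with fundamental form `Ω`;
hence `g ↦ Ω` is a bijection between hyperhermitian inner products and q-real,
q-positive `(2,0)`-forms. -/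
theorem existsUnique_hyperhermitian_of_fundForm
    {V : Type*} [AddCommGroup V] [Module ℝ V]
    (I J : Module.End ℝ V)
    (hI : I * I = -1) (hJ : J * J = -1) (hIJ : I * J = -(J * I))
    (Ω : V →ₗ[ℝ] V →ₗ[ℝ] ℂ)
    (halt : ∀ X Y : V, Ω X Y = -(Ω Y X))
    (htype : ∀ X Y : V, Ω (I X) Y = Complex.I * Ω X Y)
    (hqreal : ∀ X Y : V, (starRingEnd ℂ) (Ω (J X) (J Y)) = Ω X Y)
    (hqpos : ∀ X : V, X ≠ 0 → 0 < Ω X (J X)) :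
    (∃! B : V →ₗ[ℝ] V →ₗ[ℝ] ℝ, IsHyperHermitianWithFundForm I J Ω B) ∧
    (∀ B : V →ₗ[ℝ] V →ₗ[ℝ] ℝ, IsHyperHermitianWithFundForm I J Ω B →
      ∀ X Y : V, B X Y = 2 * (Ω X (J Y)).re) :=
  existsUnique_hyperhermitian_of_fundForm_general I J hJ hIJ Ω halt htype hqreal hqpos
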